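/- arXiv:2105.07840 — 6 statements merged into one kernel-verified Lean document; each statement's English description precedes it below -/
import Mathlib

section
/- Let a = (a_1, a_2, ...) and b = (b_1, b_2, ...) be partitions of nonnegative integers (weakly decreasing, finitely supported), with conjugate partitions p = (p_1, p_2, ...) and q = (q_1, q_2, ...) respectively, where p_k = #{i : a_i ≥ k} and q_k = #{i : b_i ≥ k}. Let k ≥ 0 be an integer. Then a_j ≥ b_{j+k} for all j ≥ 1 if and only if p_j ≥ q_j − k for all j ≥ 1. -/
/-!
Conjugation is a Galois connection: for `m, i ≥ 1`, `i ≤ p_m ↔ m ≤ a_i`, since for decreasing `a`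
the set `{i ≥ 1 | m ≤ a_i}` is the initial segment `{1, …, p_m}`. Through this equivalence each
of the two conditions follows from the other by one substitution: `i = q_j - k` in one
direction and `m = b_{j+k}` in the other.
-/

theorem finite_setOf_le_of_eventually_zero {c : ℕ → ℕ} (hc0 : ∃ N, ∀ i, N ≤ i → c i = 0) {m : ℕ}
    (hm : 1 ≤ m) : {j | 1 ≤ j ∧ m ≤ c j}.Finite := by
  obtain ⟨N, hN⟩ := hc0
  refine (Set.finite_Iio N).subset fun j ⟨_, hj⟩ => ?_
  by_contra hjN
  have := hN j (not_lt.1 hjN)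
  omega

theorem le_ncard_setOf_le_iff {c : ℕ → ℕ} (hc : AntitoneOn c (Set.Ici 1))
    (hc0 : ∃ N, ∀ i, N ≤ i → c i = 0) {m i : ℕ} (hm : 1 ≤ m) (hi : 1 ≤ i) :
    i ≤ {j | 1 ≤ j ∧ m ≤ c j}.ncard ↔ m ≤ c i := by
  constructor
  · intro h
    by_contra! hci
    have hsub : {j | 1 ≤ j ∧ m ≤ c j} ⊆ Set.Icc 1 (i - 1) := by
      rintro j ⟨hj, hmj⟩
      refine ⟨hj, Nat.le_sub_one_of_lt (lt_of_not_ge fun hij => ?_)⟩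
      have := hc (Set.mem_Ici.2 hi) (Set.mem_Ici.2 hj) hij
      omega
    have := Set.ncard_le_ncard hsub (Set.finite_Icc _ _)
    rw [Set.ncard_Icc_nat] at this
    omega
  · intro h
    have hsub : Set.Icc 1 i ⊆ {j | 1 ≤ j ∧ m ≤ c j} := fun j ⟨hj, hji⟩ =>
      ⟨hj, h.trans (hc (Set.mem_Ici.2 hj) (Set.mem_Ici.2 hi) hji)⟩
    simpa using Set.ncard_le_ncard hsub (finite_setOf_le_of_eventually_zero hc0 hm)

/-- Lemma 4.2: for partitions `a`, `b` (indexed from 1, weakly decreasing, finitely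
supported) with conjugate partitions `p`, `q`, and an integer `k ≥ 0`:
`a_j ≥ b_{j+k}` for all `j ≥ 1` iff `p_j ≥ q_j − k` for all `j ≥ 1`. -/
theorem stmt0 (a b : ℕ → ℕ)
    (ha : ∀ i, 1 ≤ i → a (i + 1) ≤ a i) (hb : ∀ i, 1 ≤ i → b (i + 1) ≤ b i)
    (ha0 : ∃ N, ∀ i, N ≤ i → a i = 0) (hb0 : ∃ N, ∀ i, N ≤ i → b i = 0)
    (p q : ℕ → ℕ)
    (hp : ∀ k, 1 ≤ k → p k = Set.ncard {i | 1 ≤ i ∧ k ≤ a i})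
    (hq : ∀ k, 1 ≤ k → q k = Set.ncard {i | 1 ≤ i ∧ k ≤ b i})
    (k : ℕ) :
    (∀ j, 1 ≤ j → b (j + k) ≤ a j) ↔ (∀ j, 1 ≤ j → (q j : ℤ) - (k : ℤ) ≤ (p j : ℤ)) := by
  have hpa : ∀ m i, 1 ≤ m → 1 ≤ i → (i ≤ p m ↔ m ≤ a i) := fun m i hm hi => by
    rw [hp m hm]
    exact le_ncard_setOf_le_iff (antitoneOn_nat_Ici_of_succ_le ha) ha0 hm hi
  have hqb : ∀ m i, 1 ≤ m → 1 ≤ i → (i ≤ q m ↔ m ≤ b i) := fun m i hm hi => by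
    rw [hq m hm]
    exact le_ncard_setOf_le_iff (antitoneOn_nat_Ici_of_succ_le hb) hb0 hm hi
  constructor
  · intro H j hj
    obtain hqk | hkq := le_or_gt (q j) k
    · omega
    have hbj : j ≤ b (q j - k + k) := (hqb j _ hj (by omega)).1 (by omega)
    have := (hpa j (q j - k) hj (by omega)).2 (hbj.trans (H _ (by omega)))
    omega
  · intro H j hj
    obtain hzero | hbpos := Nat.eq_zero_or_pos (b (j + k))
    · omega
    have hjk := (hqb _ (j + k) hbpos (by omega)).2 le_rfl
    have := H _ hbpos
    exact (hpa _ j hbpos hj).1 (by omega)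
end

section
/- Let c = (c_1, ..., c_{m+1}) and d = (d_1, ..., d_m) be weakly decreasing finite sequences of nonnegative integers with d_i < c_i for some i. Let r = (r_1, r_2, ...) and s = (s_1, s_2, ...) be the conjugate partitions of c and d, and set r_0 = m+1, s_0 = m. Let g = max{i ≥ 1 : r_i > s_i} and h = min{i : d_i < c_i}. Then g = c_h. -/
/-! The column `c_h` of the first row where `c` exceeds `d` separates the two regimes:
at height `k = c_h` the rows `1, …, h` of `c` reach `k` while at most the rows `1, …, h - 1`
of `d` do, so `r_k > s_k`; above `c_h` only rows `i < h` of `c` reach `k`, and there `c_i ≤ d_i`,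
so `r_k ≤ s_k`. Hence the last `k` with `r_k > s_k` is `c_h`. -/

open Finset

def conjugatePartition (c : ℕ → ℕ) (n k : ℕ) : ℕ :=
  #{i ∈ Icc 1 n | k ≤ c i}

section

variable {c d : ℕ → ℕ} {n h k : ℕ}

theorem le_conjugatePartition (hc : AntitoneOn c (Set.Icc 1 n)) (hhn : h ≤ n)
    (hk : k ≤ c h) : h ≤ conjugatePartition c n k := by
  have hsub : Icc 1 h ⊆ {i ∈ Icc 1 n | k ≤ c i} := by
    intro i hi
    simp only [mem_filter, mem_Icc] at hi ⊢
    exact ⟨⟨hi.1, hi.2.trans hhn⟩,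
      hk.trans (hc ⟨hi.1, hi.2.trans hhn⟩ ⟨hi.1.trans hi.2, hhn⟩ hi.2)⟩
  simpa [conjugatePartition] using card_le_card hsub

theorem conjugatePartition_lt (hd : AntitoneOn d (Set.Icc 1 n)) (hh : 1 ≤ h)
    (hk : d h < k) : conjugatePartition d n k < h := by
  have hsub : {i ∈ Icc 1 n | k ≤ d i} ⊆ Ico 1 h := by
    intro i hi
    simp only [mem_filter, mem_Icc, mem_Ico] at hi ⊢
    refine ⟨hi.1.1, Nat.lt_of_not_le fun hhi => ?_⟩
    have : d i ≤ d h := hd ⟨hh, hhi.trans hi.1.2⟩ ⟨hi.1.1, hi.1.2⟩ hhi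
    omega
  have := card_le_card hsub
  simp only [Nat.card_Ico] at this
  exact Nat.lt_of_le_of_lt this (by omega)

theorem conjugatePartition_le_of_lt (hc : AntitoneOn c (Set.Icc 1 (n + 1))) (hh : 1 ≤ h)
    (hhn : h ≤ n) (hcd : ∀ i, 1 ≤ i → i < h → c i ≤ d i) (hk : c h < k) :
    conjugatePartition c (n + 1) k ≤ conjugatePartition d n k := by
  apply card_le_card
  intro i hi
  simp only [mem_filter, mem_Icc] at hi ⊢
  have hih : i < h := Nat.lt_of_not_le fun hhi => by
    have : c i ≤ c h := hc ⟨hh, by omega⟩ hi.1 hhi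
    omega
  exact ⟨⟨hi.1.1, by omega⟩, hi.2.trans (hcd i hi.1.1 hih)⟩

end

theorem stmt2_general (m : ℕ) (c d : ℕ → ℕ)
    (hc : ∀ i j, 1 ≤ i → i ≤ j → j ≤ m + 1 → c j ≤ c i)
    (hd : ∀ i j, 1 ≤ i → i ≤ j → j ≤ m → d j ≤ d i)
    (r s : ℕ → ℕ)
    (hr : ∀ k, 1 ≤ k → r k = ((Finset.Icc 1 (m + 1)).filter fun i => k ≤ c i).card)
    (hs : ∀ k, 1 ≤ k → s k = ((Finset.Icc 1 m).filter fun i => k ≤ d i).card)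
    (h g : ℕ)
    (hh1 : 1 ≤ h) (hh2 : h ≤ m) (hh3 : d h < c h)
    (hh4 : ∀ i, 1 ≤ i → i < h → c i ≤ d i)
    (hg2 : s g < r g)
    (hg3 : ∀ i, g < i → r i ≤ s i) :
    g = c h := by
  have hc' : AntitoneOn c (Set.Icc 1 (m + 1)) := fun i hi j hj hij => hc i j hi.1 hij hj.2
  have hd' : AntitoneOn d (Set.Icc 1 m) := fun i hi j hj hij => hd i j hi.1 hij hj.2
  have hpos : 1 ≤ c h := Nat.one_le_of_lt hh3
  have hjump : s (c h) < r (c h) := by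
    rw [hr _ hpos, hs _ hpos]
    exact (conjugatePartition_lt hd' hh1 hh3).trans_le
      (le_conjugatePartition hc' (by omega) le_rfl)
  have habove : ∀ k, c h < k → r k ≤ s k := fun k hk => by
    rw [hr _ (by omega), hs _ (by omega)]
    exact conjugatePartition_le_of_lt hc' hh1 hh2 hh4 hk
  exact le_antisymm (not_lt.1 fun hlt => (habove g hlt).not_gt hg2)
    (not_lt.1 fun hlt => (hg3 _ hlt).not_gt hjump)

/-- Lemma 4.4, equation (4.2): with `c = (c_1,…,c_{m+1})`, `d = (d_1,…,d_m)` weakly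
decreasing sequences of nonnegative integers, `r`, `s` their conjugate partitions,
`h = min{i : d_i < c_i}` and `g = max{i ≥ 1 : r_i > s_i}`, one has `g = c_h`. -/
theorem stmt2 (m : ℕ) (c d : ℕ → ℕ)
    (hc : ∀ i j, 1 ≤ i → i ≤ j → j ≤ m + 1 → c j ≤ c i)
    (hd : ∀ i j, 1 ≤ i → i ≤ j → j ≤ m → d j ≤ d i)
    (r s : ℕ → ℕ)
    (hr : ∀ k, 1 ≤ k → r k = ((Finset.Icc 1 (m + 1)).filter fun i => k ≤ c i).card)
    (hs : ∀ k, 1 ≤ k → s k = ((Finset.Icc 1 m).filter fun i => k ≤ d i).card)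
    (h g : ℕ)
    (hh1 : 1 ≤ h) (hh2 : h ≤ m) (hh3 : d h < c h)
    (hh4 : ∀ i, 1 ≤ i → i < h → c i ≤ d i)
    (hg1 : 1 ≤ g) (hg2 : s g < r g)
    (hg3 : ∀ i, g < i → r i ≤ s i) :
    g = c h :=
  stmt2_general m c d hc hd r s hr hs h g hh1 hh2 hh3 hh4 hg2 hg3
end

section
/- Let c = (c_1, ..., c_{m+1}) and d = (d_1, ..., d_m) be weakly decreasing finite sequences of nonnegative integers with d_i < c_i for some i. Let r and s be the conjugate partitions of c and d, let g = max{i ≥ 1 : r_i > s_i} and h = min{i : d_i < c_i}. Then ∑_{j=1}^{g} (r_j − s_j − 1) = ∑_{j=h}^{m} (c_{j+1} − d_j). -/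
/-!
Interchanging the order of summation gives `∑_{k ≤ g} r_k = ∑_i min (c_i, g)`, and likewise
for `s`.
Comparing `r` and `s` just above and at `c_h` shows `g = c_h`. Then `c_i, d_i ≥ g` for `i < h`
and `c_i, d_i ≤ g` for `i ≥ h`, so both truncated sums are `(h - 1) g` plus a tail, and the
difference of the tails, after removing `c_h = g`, is the right-hand side.
-/

open Finset

def conjugate (n : ℕ) (f : ℕ → ℕ) (k : ℕ) : ℕ := #{i ∈ Icc 1 n | k ≤ f i}

theorem sum_Icc_conjugate (n g : ℕ) (f : ℕ → ℕ) :
    ∑ k ∈ Icc 1 g, conjugate n f k = ∑ i ∈ Icc 1 n, min (f i) g := by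
  simp_rw [conjugate, card_filter]
  rw [sum_comm]
  refine sum_congr rfl fun i _ => ?_
  rw [← card_filter]
  calc #{j ∈ Icc 1 g | j ≤ f i} = #(Icc 1 (min (f i) g)) := by
        congr 1; ext j; simp only [mem_filter, mem_Icc]; omega
    _ = min (f i) g := by rw [Nat.card_Icc, Nat.add_sub_cancel]

theorem sum_Icc_min_eq_of_threshold {f : ℕ → ℕ} {g h n : ℕ} (hh : 1 ≤ h) (hhn : h ≤ n)
    (hbelow : ∀ i ∈ Ico 1 h, g ≤ f i) (habove : ∀ i ∈ Icc h n, f i ≤ g) :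
    ∑ i ∈ Icc 1 n, min (f i) g = (h - 1) * g + ∑ i ∈ Icc h n, f i := by
  rw [← Ico_add_one_right_eq_Icc, ← sum_Ico_consecutive _ hh (by omega : h ≤ n + 1),
    Ico_add_one_right_eq_Icc, sum_congr rfl fun i hi => min_eq_right (hbelow i hi),
    sum_congr rfl fun i hi => min_eq_left (habove i hi), sum_const, Nat.card_Ico, smul_eq_mul]

theorem sum_Icc_add_one_eq_add_sum_Icc {M : Type*} [AddCommMonoid M] (f : ℕ → M) {a b : ℕ}
    (hab : a ≤ b + 1) :
    ∑ i ∈ Icc a (b + 1), f i = f a + ∑ i ∈ Icc a b, f (i + 1) := by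
  rw [← insert_Icc_add_one_left_eq_Icc hab, sum_insert (by simp), ← map_add_right_Icc, sum_map]
  rfl

section

variable {m h : ℕ} {c d : ℕ → ℕ}

theorem conjugate_le_conjugate_of_lt (hc : AntitoneOn c (Set.Icc 1 (m + 1))) (hh1 : 1 ≤ h)
    (hh2 : h ≤ m) (hh4 : ∀ i, 1 ≤ i → i < h → c i ≤ d i) {k : ℕ} (hk : c h < k) :
    conjugate (m + 1) c k ≤ conjugate m d k := by
  refine card_le_card fun i hi => ?_
  simp only [mem_filter, mem_Icc] at hi ⊢
  obtain ⟨⟨hi1, him⟩, hki⟩ := hi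
  have hih : i < h := by
    by_contra! hhi
    have := hc ⟨hh1, by omega⟩ ⟨hi1, him⟩ hhi
    omega
  exact ⟨⟨hi1, by omega⟩, hki.trans (hh4 i hi1 hih)⟩

theorem conjugate_lt_conjugate_at (hc : AntitoneOn c (Set.Icc 1 (m + 1)))
    (hd : AntitoneOn d (Set.Icc 1 m)) (hh1 : 1 ≤ h) (hh2 : h ≤ m) (hh3 : d h < c h) :
    conjugate m d (c h) < conjugate (m + 1) c (c h) := by
  have hd_le : conjugate m d (c h) ≤ #(Ico 1 h) := by
    refine card_le_card fun i hi => ?_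
    simp only [mem_filter, mem_Icc, mem_Ico] at hi ⊢
    obtain ⟨⟨hi1, him⟩, hci⟩ := hi
    refine ⟨hi1, ?_⟩
    by_contra! hhi
    have := hd ⟨hh1, hh2⟩ ⟨hi1, him⟩ hhi
    omega
  have hc_ge : #(Icc 1 h) ≤ conjugate (m + 1) c (c h) := by
    refine card_le_card fun i hi => ?_
    simp only [mem_filter, mem_Icc] at hi ⊢
    exact ⟨⟨hi.1, by omega⟩, hc ⟨hi.1, by omega⟩ ⟨hh1, by omega⟩ hi.2⟩
  rw [Nat.card_Ico] at hd_le
  rw [Nat.card_Icc] at hc_ge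
  omega

theorem eq_of_conjugate_lt_of_forall_lt (hc : AntitoneOn c (Set.Icc 1 (m + 1)))
    (hd : AntitoneOn d (Set.Icc 1 m)) (hh1 : 1 ≤ h) (hh2 : h ≤ m) (hh3 : d h < c h)
    (hh4 : ∀ i, 1 ≤ i → i < h → c i ≤ d i) {g : ℕ}
    (hg2 : conjugate m d g < conjugate (m + 1) c g)
    (hg3 : ∀ k, g < k → conjugate (m + 1) c k ≤ conjugate m d k) :
    g = c h := by
  apply le_antisymm
  · by_contra! hlt
    exact (conjugate_le_conjugate_of_lt hc hh1 hh2 hh4 hlt).not_gt hg2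
  · by_contra! hlt
    exact (conjugate_lt_conjugate_at hc hd hh1 hh2 hh3).not_ge (hg3 _ hlt)

theorem sum_Icc_conjugate_of_antitoneOn {n : ℕ} {f : ℕ → ℕ}
    (hf : AntitoneOn f (Set.Icc 1 n)) (hh1 : 1 ≤ h) (hhn : h ≤ n) :
    ∑ k ∈ Icc 1 (f h), conjugate n f k = (h - 1) * f h + ∑ i ∈ Icc h n, f i := by
  rw [sum_Icc_conjugate, sum_Icc_min_eq_of_threshold hh1 hhn]
  · intro i hi
    rw [mem_Ico] at hi
    exact hf ⟨hi.1, by omega⟩ ⟨hh1, hhn⟩ hi.2.le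
  · intro i hi
    rw [mem_Icc] at hi
    exact hf ⟨hh1, hhn⟩ ⟨by omega, hi.2⟩ hi.1

theorem sum_Icc_conjugate_of_first_descent (hc : AntitoneOn c (Set.Icc 1 (m + 1)))
    (hd : AntitoneOn d (Set.Icc 1 m)) (hh1 : 1 ≤ h) (hh2 : h ≤ m) (hh3 : d h < c h)
    (hh4 : ∀ i, 1 ≤ i → i < h → c i ≤ d i) :
    ∑ k ∈ Icc 1 (c h), conjugate m d k = (h - 1) * c h + ∑ i ∈ Icc h m, d i := by
  rw [sum_Icc_conjugate, sum_Icc_min_eq_of_threshold hh1 hh2]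
  · intro i hi
    rw [mem_Ico] at hi
    exact (hc ⟨hi.1, by omega⟩ ⟨hh1, by omega⟩ hi.2.le).trans (hh4 i hi.1 hi.2)
  · intro i hi
    rw [mem_Icc] at hi
    exact (hd ⟨hh1, hh2⟩ ⟨by omega, hi.2⟩ hi.1).trans hh3.le

end

/-- Lemma 4.4, equation (4.2): with `c = (c_1,…,c_{m+1})`, `d = (d_1,…,d_m)` weakly
decreasing sequences of nonnegative integers, `r`, `s` their conjugate partitions,
`h = min{i : d_i < c_i}` and `g = max{i ≥ 1 : r_i > s_i}`, then ∑_{j=1}^{g} (r_j − s_j − 1) = ∑_{j=h}^{m} (c_{j+1} − d_j). -/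
theorem stmt3 (m : ℕ) (c d : ℕ → ℕ)
    (hc : ∀ i j, 1 ≤ i → i ≤ j → j ≤ m + 1 → c j ≤ c i)
    (hd : ∀ i j, 1 ≤ i → i ≤ j → j ≤ m → d j ≤ d i)
    (r s : ℕ → ℕ)
    (hr : ∀ k, 1 ≤ k → r k = ((Finset.Icc 1 (m + 1)).filter fun i => k ≤ c i).card)
    (hs : ∀ k, 1 ≤ k → s k = ((Finset.Icc 1 m).filter fun i => k ≤ d i).card)
    (h g : ℕ)
    (hh1 : 1 ≤ h) (hh2 : h ≤ m) (hh3 : d h < c h)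
    (hh4 : ∀ i, 1 ≤ i → i < h → c i ≤ d i)
    (hg1 : 1 ≤ g) (hg2 : s g < r g)
    (hg3 : ∀ i, g < i → r i ≤ s i) :
    ∑ j ∈ Finset.Icc 1 g, ((r j : ℤ) - (s j : ℤ) - 1) = ∑ j ∈ Finset.Icc h m, ((c (j + 1) : ℤ) - (d j : ℤ)) := by
  have hc' : AntitoneOn c (Set.Icc 1 (m + 1)) := fun i hi j hj hij => hc i j hi.1 hij hj.2
  have hd' : AntitoneOn d (Set.Icc 1 m) := fun i hi j hj hij => hd i j hi.1 hij hj.2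
  have hr' : ∀ k, 1 ≤ k → r k = conjugate (m + 1) c k := hr
  have hs' : ∀ k, 1 ≤ k → s k = conjugate m d k := hs
  obtain rfl : g = c h := by
    refine eq_of_conjugate_lt_of_forall_lt hc' hd' hh1 hh2 hh3 hh4 ?_ fun k hk => ?_
    · rwa [← hr' g hg1, ← hs' g hg1]
    · rw [← hr' k (by omega), ← hs' k (by omega)]
      exact hg3 k hk
  have hr_sum :
      ∑ k ∈ Icc 1 (c h), r k = (h - 1) * c h + (c h + ∑ i ∈ Icc h m, c (i + 1)) := by
    rw [sum_congr rfl fun k hk => hr' k (mem_Icc.1 hk).1,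
      sum_Icc_conjugate_of_antitoneOn hc' hh1 (by omega),
      sum_Icc_add_one_eq_add_sum_Icc _ (by omega)]
  have hs_sum : ∑ k ∈ Icc 1 (c h), s k = (h - 1) * c h + ∑ i ∈ Icc h m, d i := by
    rw [sum_congr rfl fun k hk => hs' k (mem_Icc.1 hk).1,
      sum_Icc_conjugate_of_first_descent hc' hd' hh1 hh2 hh3 hh4]
  simp only [sum_sub_distrib, ← Nat.cast_sum, hr_sum, hs_sum, sum_const, Nat.card_Icc]
  push_cast
  ring
end

section
/- Let c = (c_1, ..., c_m) and d = (d_1, ..., d_{m+1}) be weakly decreasing finite sequences of nonnegative integers. Say d is 1step-majorized by c (written d ≺' c) if, setting h = min{i : c_i < d_i} (with c_{m+1} = −∞, so h exists and h ≤ m+1), one has c_i = d_{i+1} for all h ≤ i ≤ m. Let r, s be the conjugate partitions of d and c respectively (so r corresponds to the longer sequence d), with r_0 = m+1 and s_0 = m, and view them as weakly decreasing sequences (r_0, r_1, ...) and (s_0, s_1, ...). Then d ≺' c holds if and only if s is conjugate-majorized by r, i.e., r_0 = s_0 + 1 and r_i = s_i + 1 for all 0 ≤ i ≤ g, where g = max{i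 : r_i > s_i}. -/
/-!
Both sides are read through the Galois connection `t ≤ r k ↔ k ≤ d t` (and `t ≤ s k ↔ k ≤ c t`)
between a weakly decreasing sequence and its conjugate. Let `h` be the first index with
`c h < d h`. If `d ≺' c`, then `d` interlaces `c`, which is exactly `r ≤ s + 1`; the levels
`k ≤ d h` are those where `r k = s k + 1` and above `d h` one has `r k ≤ s k`, so
`g = d h` and `s ∠ r`. Conversely `s ∠ r` gives interlacing `d (i + 1) ≤ c i`, and a strict
inequality at some `i ≥ h` would produce the level `k = d (i + 1) + 1 ≤ g` with `r k ≤ s k`.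
-/

open Finset

/-- `r` is the conjugate of `a 1 ≥ ⋯ ≥ a n`, in Galois form; `r 0` is left free. -/
structure IsConjugate (n : ℕ) (a r : ℕ → ℕ) : Prop where
  le_length : ∀ k, 1 ≤ k → r k ≤ n
  le_iff : ∀ k t, 1 ≤ k → 1 ≤ t → t ≤ n → (t ≤ r k ↔ k ≤ a t)

theorem isConjugate_of_eq_card {n : ℕ} {a r : ℕ → ℕ} (ha : AntitoneOn a (Set.Icc 1 n))
    (hr : ∀ k, 1 ≤ k → r k = #{i ∈ Icc 1 n | k ≤ a i}) : IsConjugate n a r where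
  le_length k hk := by
    simpa [hr k hk] using card_filter_le (Icc 1 n) fun i => k ≤ a i
  le_iff k t hk ht1 htn := by
    rw [hr k hk]
    constructor
    · intro htr
      by_contra! hkt
      have hsub : #{i ∈ Icc 1 n | k ≤ a i} ≤ #(Icc 1 (t - 1)) := card_le_card fun i hi => by
        simp only [mem_filter, mem_Icc] at hi ⊢
        by_contra! hti
        have := ha ⟨ht1, htn⟩ ⟨hi.1.1, hi.1.2⟩ (by omega : t ≤ i)
        omega
      simp only [Nat.card_Icc] at hsub
      omega
    · intro hkt
      have hsub : #(Icc 1 t) ≤ #{i ∈ Icc 1 n | k ≤ a i} := card_le_card fun i hi => by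
        simp only [mem_filter, mem_Icc] at hi ⊢
        exact ⟨⟨hi.1, hi.2.trans htn⟩, hkt.trans (ha ⟨hi.1, hi.2.trans htn⟩ ⟨ht1, htn⟩ hi.2)⟩
      simpa using hsub

section Conjugates

variable {m h k : ℕ} {c d r s : ℕ → ℕ}

theorem interlace_iff_le_succ (hr : IsConjugate (m + 1) d r) (hs : IsConjugate m c s) :
    (∀ i, 1 ≤ i → i ≤ m → d (i + 1) ≤ c i) ↔ ∀ k, 1 ≤ k → r k ≤ s k + 1 := by
  constructor
  · intro hint k hk
    by_contra! hsr
    have hrm := hr.le_length k hk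
    have hkd : k ≤ d (s k + 2) := (hr.le_iff k (s k + 2) hk (by omega) (by omega)).1 hsr
    have hkc : k ≤ c (s k + 1) := hkd.trans (hint _ (by omega) (by omega))
    have := (hs.le_iff k (s k + 1) hk (by omega) (by omega)).2 hkc
    omega
  · intro hle i hi1 him
    by_contra! hcd
    have hri : i + 1 ≤ r (c i + 1) := (hr.le_iff _ _ (by omega) (by omega) (by omega)).2 hcd
    have hsi : s (c i + 1) < i := by
      by_contra! his
      have := (hs.le_iff _ _ (by omega) hi1 him).1 his
      omega
    have := hle (c i + 1) (by omega)
    omega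

theorem interlace_of_descent (hd : AntitoneOn d (Set.Icc 1 (m + 1)))
    (hbefore : ∀ i, 1 ≤ i → i < h → d i ≤ c i) (htail : ∀ i, h ≤ i → i ≤ m → c i = d (i + 1))
    {i : ℕ} (hi1 : 1 ≤ i) (him : i ≤ m) : d (i + 1) ≤ c i := by
  rcases lt_or_ge i h with hih | hhi
  · exact (hd ⟨hi1, by omega⟩ ⟨by omega, by omega⟩ (by omega)).trans (hbefore i hi1 hih)
  · exact (htail i hhi him).ge

theorem le_of_descent_lt (hr : IsConjugate (m + 1) d r) (hs : IsConjugate m c s)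
    (hbefore : ∀ i, 1 ≤ i → i < h → d i ≤ c i) (hh1 : 1 ≤ h) (hhm : h ≤ m + 1)
    (hk : 1 ≤ k) (hdk : d h < k) : r k ≤ s k := by
  have hrh : r k < h := by
    by_contra! hhr
    have := (hr.le_iff k h hk hh1 hhm).1 hhr
    omega
  rcases Nat.eq_zero_or_pos (r k) with hr0 | hr1
  · omega
  have hkd : k ≤ d (r k) := (hr.le_iff k (r k) hk hr1 (by omega)).1 le_rfl
  exact (hs.le_iff k (r k) hk hr1 (by omega)).2 (hkd.trans (hbefore _ hr1 hrh))

theorem lt_of_le_descent (hr : IsConjugate (m + 1) d r) (hs : IsConjugate m c s)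
    (htail : ∀ i, h ≤ i → i ≤ m → c i = d (i + 1)) (hh1 : 1 ≤ h) (hhm : h ≤ m + 1)
    (hk : 1 ≤ k) (hkd : k ≤ d h) : s k < r k := by
  have hhr : h ≤ r k := (hr.le_iff k h hk hh1 hhm).2 hkd
  by_contra! hrs
  have hsm := hs.le_length k hk
  have hkc : k ≤ c (s k) := (hs.le_iff k (s k) hk (by omega) hsm).1 le_rfl
  rw [htail (s k) (by omega) hsm] at hkc
  have := (hr.le_iff k (s k + 1) hk (by omega) (by omega)).2 hkc
  omega

theorem le_of_conjMajorized (hr : IsConjugate (m + 1) d r) (hs : IsConjugate m c s)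
    (hmaj : ∀ i, (∃ j, i ≤ j ∧ s j < r j) → r i = s i + 1)
    (hh1 : 1 ≤ h) (hhm : h ≤ m) (hch : c h < d h) {i : ℕ} (hhi : h ≤ i) (him : i ≤ m) :
    c i ≤ d (i + 1) := by
  by_contra! hdc
  have hsk : i ≤ s (d (i + 1) + 1) := (hs.le_iff _ i (by omega) (by omega) him).2 hdc
  have hrk : r (d (i + 1) + 1) ≤ i := by
    by_contra! hir
    have := (hr.le_iff _ (i + 1) (by omega) (by omega) (by omega)).1 hir
    omega
  have hkc : d (i + 1) + 1 ≤ c h := (hs.le_iff _ h (by omega) hh1 hhm).1 (by omega)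
  have hrh : h ≤ r (c h + 1) := (hr.le_iff _ h (by omega) hh1 (by omega)).2 hch
  have hsh : s (c h + 1) < h := by
    by_contra! hhs
    have := (hs.le_iff _ h (by omega) hh1 hhm).1 hhs
    omega
  have := hmaj (d (i + 1) + 1) ⟨c h + 1, by omega, by omega⟩
  omega

end Conjugates

theorem exists_first_descent (m : ℕ) (c d : ℕ → ℕ) :
    ∃ h, 1 ≤ h ∧ h ≤ m + 1 ∧ (∀ i, 1 ≤ i → i < h → d i ≤ c i) ∧ (h ≤ m → c h < d h) := by
  have hex : ∃ h, 1 ≤ h ∧ (h = m + 1 ∨ c h < d h) := ⟨m + 1, by omega, Or.inl rfl⟩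
  obtain ⟨hh1, hspec⟩ := Nat.find_spec hex
  refine ⟨Nat.find hex, hh1, Nat.find_le ⟨by omega, Or.inl rfl⟩, fun i hi1 hih => ?_,
    fun hhm => hspec.resolve_left (by omega)⟩
  have := Nat.find_min hex hih
  omega

/-- Proposition 4.5: `d ≺' c` (1step-generalized majorization of chains) holds iff
`s ∠ r` (conjugate majorization of the conjugate partitions, with `r_0 = m+1`,
`s_0 = m` prepended).  Here `c` has length `m`, `d` has length `m+1`, `r` is the
conjugate of `d` and `s` the conjugate of `c`.  The condition `s ∠ r` is expressed
as: `r_0 = s_0 + 1` and `r_i = s_i + 1` for every `i ≤ g = max{j : r_j > s_j}`,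
i.e. for every `i` such that some `j ≥ i` has `r_j > s_j`. -/
theorem stmt4 (m : ℕ) (c d : ℕ → ℕ)
    (hc : ∀ i j, 1 ≤ i → i ≤ j → j ≤ m → c j ≤ c i)
    (hd : ∀ i j, 1 ≤ i → i ≤ j → j ≤ m + 1 → d j ≤ d i)
    (r s : ℕ → ℕ)
    (hr0 : r 0 = m + 1)
    (hr : ∀ k, 1 ≤ k → r k = ((Finset.Icc 1 (m + 1)).filter fun i => k ≤ d i).card)
    (hs0 : s 0 = m)
    (hs : ∀ k, 1 ≤ k → s k = ((Finset.Icc 1 m).filter fun i => k ≤ c i).card) :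
    (∃ h, 1 ≤ h ∧ h ≤ m + 1 ∧
        (∀ i, 1 ≤ i → i < h → d i ≤ c i) ∧
        (h ≤ m → c h < d h) ∧
        (∀ i, h ≤ i → i ≤ m → c i = d (i + 1)))
      ↔ (r 0 = s 0 + 1 ∧ ∀ i, (∃ j, i ≤ j ∧ s j < r j) → r i = s i + 1) := by
  have hd' : AntitoneOn d (Set.Icc 1 (m + 1)) := fun i hi j hj hij => hd i j hi.1 hij hj.2
  have hR : IsConjugate (m + 1) d r := isConjugate_of_eq_card hd' hr
  have hS : IsConjugate m c s :=
    isConjugate_of_eq_card (fun i hi j hj hij => hc i j hi.1 hij hj.2) hs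
  constructor
  · rintro ⟨h, hh1, hhm, hbefore, -, htail⟩
    refine ⟨by omega, fun i ⟨j, hij, hsr⟩ => ?_⟩
    rcases Nat.eq_zero_or_pos i with rfl | hi1
    · omega
    have hjd : j ≤ d h := by
      by_contra! hdj
      exact (le_of_descent_lt hR hS hbefore hh1 hhm (by omega) hdj).not_gt hsr
    have hle := (interlace_iff_le_succ hR hS).1
      (fun i hi1 him => interlace_of_descent hd' hbefore htail hi1 him) i hi1
    have hlt := lt_of_le_descent hR hS htail hh1 hhm hi1 (hij.trans hjd)
    omega
  · rintro ⟨-, hmaj⟩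
    obtain ⟨h, hh1, hhm, hbefore, hch⟩ := exists_first_descent m c d
    have hint := (interlace_iff_le_succ hR hS).2 fun k _ => by
      by_contra! hsr
      have := hmaj k ⟨k, le_rfl, by omega⟩
      omega
    exact ⟨h, hh1, hhm, hbefore, hch, fun i hhi him =>
      (le_of_conjMajorized hR hS hmaj hh1 (by omega) (hch (by omega)) hhi him).antisymm
        (hint i (by omega) him)⟩
end

section
/- Let L_{k−1}(s) ∈ F[s]^{(k−1)×k} be the singular pencil with entries s on positions (j,j) and 1 on positions (j,j+1). Then for every λ ∈ F ∪ {∞} and every 0 ≤ i ≤ k, dim L^i_λ(L_{k−1}(s)) = i; consequently w_i(λ, L_{k−1}(s)) = 1 for 1 ≤ i ≤ k. -/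
open Matrix

variable {F : Type*} [Field F]

/-- The pair `(M, N)` defining Jordan chains of the pencil `A(s) = A₀ + s·A₁` at
`λ ∈ F ∪ {∞}` (`none` denotes `∞`): for `λ ∈ F`, `M = A(λ) = A₀ + λ·A₁` and
`N = A₁`; for `λ = ∞`, `M = A₁` and `N = A₀`. -/
def jordanPair {p q : Type*} (A0 A1 : Matrix p q F) : Option F → Matrix p q F × Matrix p q F
  | none => (A1, A0)
  | some lam => (A0 + lam • A1, A1)

/-- `(x k, …, x 0)` is a right Jordan chain of length `k + 1` for the pair `(M, N)`:
`x 0 ≠ 0`, `M (x 0) = 0` and `M (x i) = −N (x (i−1))` for `1 ≤ i ≤ k`. -/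
def IsJordanChain {p q : Type*} [Fintype q] (M N : Matrix p q F) (k : ℕ) (x : ℕ → q → F) : Prop :=
  x 0 ≠ 0 ∧ M.mulVec (x 0) = 0 ∧ ∀ i, 1 ≤ i → i ≤ k → M.mulVec (x i) = -(N.mulVec (x (i - 1)))

/-- `Lspace M N ℓ` : the span of all vectors appearing in Jordan chains of length at
most `ℓ` (so `Lspace M N 0 = {0}`). -/
def Lspace {p q : Type*} [Fintype q] (M N : Matrix p q F) (ℓ : ℕ) : Submodule F (q → F) :=
  Submodule.span F {v | ∃ k, k + 1 ≤ ℓ ∧ ∃ x, IsJordanChain M N k x ∧ ∃ j ≤ k, v = x j}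

/-- The generalized Weyr characteristic
`w_i(λ, A(s)) = dim (L^i_λ(A(s)) / L^{i−1}_λ(A(s)))`. -/
noncomputable def weyr {p q : Type*} [Fintype q] (A0 A1 : Matrix p q F) (lam : Option F)
    (i : ℕ) : ℕ :=
  Module.finrank F (Lspace (jordanPair A0 A1 lam).1 (jordanPair A0 A1 lam).2 i)
    - Module.finrank F (Lspace (jordanPair A0 A1 lam).1 (jordanPair A0 A1 lam).2 (i - 1))

/-!
For `λ ∈ F` the kernel of `L_{k-1}(λ)` is spanned by `((-λ) ^ i)ᵢ`, and the Taylor coefficients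
at `λ` of the polynomial kernel vector `((-s) ^ i)ᵢ` form a Jordan chain `w₀, …, w_{k-1}`; at
`λ = ∞` the signed unit vectors `± e_{k-1-j}` do. Because the kernel is a line, every Jordan
chain `x₀, …, xⱼ` lies term by term in `span (w₀, …, wⱼ)`: if `xⱼ` is a combination of
`w₀, …, wⱼ`, the same combination of `w₁, …, w_{j+1}` differs from `x_{j+1}` by a kernel vector.
Hence `L^i_λ = span (w₀, …, w_{i-1})`, of dimension `i` since the `wⱼ` are triangular with
nonzero pivots.
-/

theorem linearIndependent_of_triangular_pivots {ι q : Type*} [Fintype ι] [LinearOrder ι]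
    (v : ι → q → F) (p : ι → q) (hdiag : ∀ j, v j (p j) ≠ 0)
    (htri : ∀ j j', j' < j → v j (p j') = 0) : LinearIndependent F v := by
  have hR : (Matrix.of fun j j' => v j (p j')).IsUpperTriangular := fun j j' h => htri j j' h
  have hdet : (Matrix.of fun j j' => v j (p j')).det ≠ 0 := by
    rw [det_of_isUpperTriangular hR]
    exact Finset.prod_ne_zero_iff.mpr fun j _ => hdiag j
  exact .of_comp (LinearMap.funLeft F F p) (linearIndependent_rows_of_det_ne_zero hdet)

theorem finrank_span_image_Iio {q : Type*} {n ℓ : ℕ} {w : ℕ → q → F}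
    (hw : LinearIndependent F fun j : Fin n => w j) (hℓ : ℓ ≤ n) :
    Module.finrank F (Submodule.span F (w '' Set.Iio ℓ)) = ℓ := by
  have hrange : Set.range (fun j : Fin ℓ => w j) = w '' Set.Iio ℓ := by
    ext v
    simp [Fin.exists_iff]
  rw [← hrange]
  exact (finrank_span_eq_card (hw.comp _ (Fin.castLE_injective hℓ))).trans (Fintype.card_fin ℓ)

section JordanChain

variable {p q : Type*} [Fintype q] {M N : Matrix p q F} {m : ℕ} {w : ℕ → q → F}

theorem IsJordanChain.mono {m' : ℕ} (hw : IsJordanChain M N m w) (hm : m' ≤ m) :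
    IsJordanChain M N m' w :=
  ⟨hw.1, hw.2.1, fun i hi hi' => hw.2.2 i hi (hi'.trans hm)⟩

theorem Lspace_zero : Lspace M N 0 = ⊥ := by
  simp [Lspace]

theorem IsJordanChain.span_le_comap_map (hw : IsJordanChain M N m w) {j : ℕ} (hj : j + 1 ≤ m) :
    Submodule.span F (w '' Set.Iio (j + 1)) ≤
      ((Submodule.span F (w '' Set.Iio (j + 2))).map M.mulVecLin).comap N.mulVecLin := by
  rw [Submodule.span_le]
  rintro _ ⟨t, ht, rfl⟩
  rw [Set.mem_Iio] at ht
  have hmem : w (t + 1) ∈ Submodule.span F (w '' Set.Iio (j + 2)) :=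
    Submodule.subset_span ⟨t + 1, by simpa using ht, rfl⟩
  refine ⟨-w (t + 1), Submodule.neg_mem _ hmem, ?_⟩
  rw [Matrix.mulVecLin_apply, Matrix.mulVecLin_apply, Matrix.mulVec_neg,
    hw.2.2 (t + 1) (by omega) (by omega), Nat.add_sub_cancel, neg_neg]

theorem IsJordanChain.mem_span_image_Iio (hw : IsJordanChain M N m w)
    (hker : ∀ x, M *ᵥ x = 0 → x ∈ Submodule.span F {w 0}) {m' : ℕ} {x : ℕ → q → F}
    (hx : IsJordanChain M N m' x) (hm : m' ≤ m) :
    ∀ j ≤ m', x j ∈ Submodule.span F (w '' Set.Iio (j + 1)) := by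
  have hker_le (j : ℕ) : Submodule.span F {w 0} ≤ Submodule.span F (w '' Set.Iio (j + 1)) :=
    Submodule.span_mono (Set.singleton_subset_iff.mpr (Set.mem_image_of_mem w (by simp)))
  intro j
  induction j with
  | zero => exact fun _ => hker_le 0 (hker _ hx.2.1)
  | succ j ih =>
    intro hj
    obtain ⟨u, hu, hMu⟩ := hw.span_le_comap_map (by omega) (ih (by omega))
    have hMu : M *ᵥ u = N *ᵥ x j := hMu
    have hsum : x (j + 1) + u ∈ Submodule.span F (w '' Set.Iio (j + 2)) := by
      refine hker_le (j + 1) (hker _ ?_)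
      rw [Matrix.mulVec_add, hx.2.2 (j + 1) (by omega) hj, Nat.add_sub_cancel, hMu,
        neg_add_cancel]
    simpa using Submodule.sub_mem _ hsum hu

theorem Lspace_eq_span_image_Iio (hw : IsJordanChain M N m w)
    (hker : ∀ x, M *ᵥ x = 0 → x ∈ Submodule.span F {w 0}) {ℓ : ℕ} (hℓ : ℓ ≤ m + 1) :
    Lspace M N ℓ = Submodule.span F (w '' Set.Iio ℓ) := by
  apply le_antisymm
  · rw [Lspace, Submodule.span_le]
    rintro _ ⟨m', hm', x, hx, j, hj, rfl⟩
    exact Submodule.span_mono (Set.image_mono (Set.Iio_subset_Iio (by omega)))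
      (hw.mem_span_image_Iio hker hx (by omega) j hj)
  · rw [Submodule.span_le]
    rintro _ ⟨j, hj, rfl⟩
    rw [Set.mem_Iio] at hj
    exact Submodule.subset_span ⟨ℓ - 1, by omega, w, hw.mono (by omega), j, by omega, rfl⟩

theorem finrank_Lspace_of_isJordanChain (hw : IsJordanChain M N m w)
    (hker : ∀ x, M *ᵥ x = 0 → x ∈ Submodule.span F {w 0})
    (hli : LinearIndependent F fun j : Fin (m + 1) => w j) {ℓ : ℕ} (hℓ : ℓ ≤ m + 1) :
    Module.finrank F (Lspace M N ℓ) = ℓ := by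
  rw [Lspace_eq_span_image_Iio hw hker hℓ, finrank_span_image_Iio hli hℓ]

end JordanChain

theorem sum_ite_val_eq {k c : ℕ} (x : Fin k → F) (hc : c < k) :
    (∑ i : Fin k, if (i : ℕ) = c then x i else 0) = x ⟨c, hc⟩ := by
  rw [Fintype.sum_eq_single ⟨c, hc⟩ fun i hi => if_neg fun h => hi (Fin.ext h), if_pos rfl]

section KroneckerBlock

variable {k : ℕ}

/- `L_{k-1}(s) = blockL₀ k + s • blockL₁ k`. -/
variable (k) in
def blockL₀ : Matrix (Fin (k - 1)) (Fin k) F :=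
  of fun i j => if (j : ℕ) = i + 1 then 1 else 0

variable (k) in
def blockL₁ : Matrix (Fin (k - 1)) (Fin k) F :=
  of fun i j => if (j : ℕ) = i then 1 else 0

theorem blockL₀_mulVec_apply (x : Fin k → F) (r : Fin (k - 1)) :
    (blockL₀ k *ᵥ x) r = x ⟨r + 1, by omega⟩ := by
  simpa [blockL₀, mulVec, dotProduct] using sum_ite_val_eq x _

theorem blockL₁_mulVec_apply (x : Fin k → F) (r : Fin (k - 1)) :
    (blockL₁ k *ᵥ x) r = x ⟨r, by omega⟩ := by
  simpa [blockL₁, mulVec, dotProduct] using sum_ite_val_eq x _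

end KroneckerBlock

section FiniteEigenvalue

variable {k : ℕ} (l : F)

theorem blockL_eval_mulVec_apply (x : Fin k → F) (r : Fin (k - 1)) :
    ((blockL₀ k + l • blockL₁ k) *ᵥ x) r = l * x ⟨r, by omega⟩ + x ⟨r + 1, by omega⟩ := by
  rw [add_mulVec, Pi.add_apply, smul_mulVec, Pi.smul_apply, smul_eq_mul, blockL₀_mulVec_apply,
    blockL₁_mulVec_apply, add_comm]

variable (k) in
/-- The Taylor coefficients at `l` of the kernel vector `((-s) ^ i)ᵢ` of `L_{k-1}(s)`. -/
def taylorChain (j : ℕ) : Fin k → F :=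
  fun i => (-1) ^ (i : ℕ) * ((i : ℕ).choose j) * l ^ ((i : ℕ) - j)

theorem taylorChain_succ_rec (r j : ℕ) :
    l * ((-1) ^ r * (r.choose (j + 1) : F) * l ^ (r - (j + 1)))
      + (-1) ^ (r + 1) * ((r + 1).choose (j + 1) : F) * l ^ (r + 1 - (j + 1))
      = -((-1) ^ r * (r.choose j : F) * l ^ (r - j)) := by
  have hshift :
      l * ((r.choose (j + 1) : F) * l ^ (r - (j + 1))) = r.choose (j + 1) * l ^ (r - j) := by
    rcases le_or_gt r j with h | h
    · simp [Nat.choose_eq_zero_of_lt (Nat.lt_succ_of_le h)]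
    · rw [show r - j = r - (j + 1) + 1 by omega, pow_succ]
      ring
  have hpascal : ((r + 1).choose (j + 1) : F) = (r.choose j : F) + r.choose (j + 1) := by
    rw [Nat.choose_succ_succ', Nat.cast_add]
  rw [Nat.add_sub_add_right, hpascal]
  linear_combination (-1) ^ r * hshift

theorem blockL_eval_mulVec_taylorChain_zero :
    (blockL₀ k + l • blockL₁ k) *ᵥ taylorChain k l 0 = 0 := by
  funext r
  simp only [blockL_eval_mulVec_apply, taylorChain, Nat.choose_zero_right, Nat.cast_one,
    Nat.sub_zero, Pi.zero_apply]
  ring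

theorem blockL_eval_mulVec_taylorChain_succ (j : ℕ) :
    (blockL₀ k + l • blockL₁ k) *ᵥ taylorChain k l (j + 1) =
      -(blockL₁ k *ᵥ taylorChain k l j) := by
  funext r
  rw [blockL_eval_mulVec_apply, Pi.neg_apply, blockL₁_mulVec_apply]
  exact taylorChain_succ_rec l r j

theorem linearIndependent_taylorChain :
    LinearIndependent F fun j : Fin k => taylorChain k l j := by
  refine linearIndependent_of_triangular_pivots _ id (fun j => by simp [taylorChain]) ?_
  intro j j' h
  simp [taylorChain, Nat.choose_eq_zero_of_lt (show (j' : ℕ) < j from h)]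

theorem isJordanChain_taylorChain {n : ℕ} :
    IsJordanChain (blockL₀ (n + 1) + l • blockL₁ (n + 1)) (blockL₁ (n + 1)) n
      (taylorChain (n + 1) l) := by
  refine ⟨(linearIndependent_taylorChain l).ne_zero (0 : Fin (n + 1)),
    blockL_eval_mulVec_taylorChain_zero l, fun i hi _ => ?_⟩
  obtain ⟨j, rfl⟩ := Nat.exists_eq_add_of_le' hi
  exact blockL_eval_mulVec_taylorChain_succ l j

theorem mem_span_taylorChain_of_mulVec_eq_zero {n : ℕ} {x : Fin (n + 1) → F}
    (hx : (blockL₀ (n + 1) + l • blockL₁ (n + 1)) *ᵥ x = 0) :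
    x ∈ Submodule.span F {taylorChain (n + 1) l 0} := by
  have hstep (r : ℕ) (hr : r < n) : x ⟨r + 1, by omega⟩ = -l * x ⟨r, by omega⟩ := by
    have := congrFun hx ⟨r, by omega⟩
    rw [blockL_eval_mulVec_apply, Pi.zero_apply] at this
    linear_combination this
  have hgeom (i : ℕ) (hi : i < n + 1) : x ⟨i, hi⟩ = x 0 * (-l) ^ i := by
    induction i with
    | zero => simp
    | succ i ih => rw [hstep i (by omega), ih (by omega), pow_succ]; ring
  refine Submodule.mem_span_singleton.mpr ⟨x 0, funext fun i => ?_⟩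
  rw [Pi.smul_apply, smul_eq_mul, taylorChain, hgeom i i.2, neg_pow l]
  simp

end FiniteEigenvalue

section InfiniteEigenvalue

variable {k : ℕ}

variable (k) in
def reverseChain (j : ℕ) : Fin k → F :=
  fun i => if (i : ℕ) + j = k - 1 then (-1) ^ j else 0

theorem blockL₁_mulVec_reverseChain_zero : blockL₁ k *ᵥ reverseChain (F := F) k 0 = 0 := by
  funext r
  simp [blockL₁_mulVec_apply, reverseChain, Nat.ne_of_lt r.2]

theorem blockL₁_mulVec_reverseChain_succ (j : ℕ) :
    blockL₁ k *ᵥ reverseChain (F := F) k (j + 1) = -(blockL₀ k *ᵥ reverseChain k j) := by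
  funext r
  simp only [blockL₁_mulVec_apply, blockL₀_mulVec_apply, Pi.neg_apply, reverseChain]
  rw [show (r : ℕ) + 1 + j = r + (j + 1) by ring]
  split_ifs <;> simp [pow_succ]

theorem linearIndependent_reverseChain :
    LinearIndependent F fun j : Fin k => reverseChain (F := F) k j := by
  refine linearIndependent_of_triangular_pivots _ Fin.rev (fun j => ?_) fun j j' h => ?_
  · simp [reverseChain]
    omega
  · have : (j' : ℕ) < j := h
    simp [reverseChain]
    omega

theorem isJordanChain_reverseChain {n : ℕ} :
    IsJordanChain (blockL₁ (n + 1)) (blockL₀ (n + 1)) n (reverseChain (F := F) (n + 1)) := by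
  refine ⟨linearIndependent_reverseChain.ne_zero (0 : Fin (n + 1)),
    blockL₁_mulVec_reverseChain_zero, fun i hi _ => ?_⟩
  obtain ⟨j, rfl⟩ := Nat.exists_eq_add_of_le' hi
  exact blockL₁_mulVec_reverseChain_succ j

theorem mem_span_reverseChain_of_mulVec_eq_zero {n : ℕ} {x : Fin (n + 1) → F}
    (hx : blockL₁ (n + 1) *ᵥ x = 0) : x ∈ Submodule.span F {reverseChain (n + 1) 0} := by
  refine Submodule.mem_span_singleton.mpr ⟨x (Fin.last n), funext fun i => ?_⟩
  rcases Fin.eq_castSucc_or_eq_last i with ⟨i, rfl⟩ | rfl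
  · have hi : x i.castSucc = 0 := (blockL₁_mulVec_apply x i).symm.trans (congrFun hx i)
    simp [reverseChain, hi, Nat.ne_of_lt i.2]
  · simp [reverseChain]

end InfiniteEigenvalue

theorem finrank_Lspace_blockL {k ℓ : ℕ} (lam : Option F) (hℓ : ℓ ≤ k) :
    Module.finrank F (Lspace (jordanPair (blockL₀ k) (blockL₁ k) lam).1
      (jordanPair (blockL₀ k) (blockL₁ k) lam).2 ℓ) = ℓ := by
  rcases k with _ | n
  · obtain rfl : ℓ = 0 := by omega
    rw [Lspace_zero, finrank_bot]
  cases lam with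
  | none =>
    exact finrank_Lspace_of_isJordanChain isJordanChain_reverseChain
      (fun _ => mem_span_reverseChain_of_mulVec_eq_zero) linearIndependent_reverseChain hℓ
  | some l =>
    exact finrank_Lspace_of_isJordanChain (isJordanChain_taylorChain l)
      (fun _ => mem_span_taylorChain_of_mulVec_eq_zero l) (linearIndependent_taylorChain l) hℓ

theorem stmt11_general (k : ℕ)
    (A0 A1 : Matrix (Fin (k - 1)) (Fin k) F)
    (hA0 : A0 = Matrix.of fun (i : Fin (k - 1)) (j : Fin k) =>
      if (j : ℕ) = (i : ℕ) + 1 then 1 else 0)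
    (hA1 : A1 = Matrix.of fun (i : Fin (k - 1)) (j : Fin k) =>
      if (j : ℕ) = (i : ℕ) then 1 else 0) :
    (∀ (lam : Option F) (i : ℕ), i ≤ k →
        Module.finrank F (Lspace (jordanPair A0 A1 lam).1 (jordanPair A0 A1 lam).2 i) = i) ∧
    (∀ (lam : Option F) (i : ℕ), 1 ≤ i → i ≤ k → weyr A0 A1 lam i = 1) := by
  obtain rfl : A0 = blockL₀ k := hA0
  obtain rfl : A1 = blockL₁ k := hA1
  refine ⟨fun lam i hi => finrank_Lspace_blockL lam hi, fun lam i hi hik => ?_⟩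
  rw [weyr, finrank_Lspace_blockL lam hik, finrank_Lspace_blockL lam (by omega)]
  omega

/-- Proposition 3.6 (3): for the singular block `L_{k−1}(s) ∈ F[s]^{(k−1)×k}` (row
`j` has `s` in column `j` and `1` in column `j+1`, so `A₁` has `1` at `(j,j)` and
`A₀` has `1` at `(j,j+1)`): `dim L^i_λ = i` for all `λ ∈ F ∪ {∞}` and `0 ≤ i ≤ k`,
hence `w_i(λ, L_{k−1}(s)) = 1` for `1 ≤ i ≤ k`. -/
theorem stmt11 (k : ℕ) (hk : 1 ≤ k)
    (A0 A1 : Matrix (Fin (k - 1)) (Fin k) F)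
    (hA0 : A0 = Matrix.of fun (i : Fin (k - 1)) (j : Fin k) =>
      if (j : ℕ) = (i : ℕ) + 1 then 1 else 0)
    (hA1 : A1 = Matrix.of fun (i : Fin (k - 1)) (j : Fin k) =>
      if (j : ℕ) = (i : ℕ) then 1 else 0) :
    (∀ (lam : Option F) (i : ℕ), i ≤ k →
        Module.finrank F (Lspace (jordanPair A0 A1 lam).1 (jordanPair A0 A1 lam).2 i) = i) ∧
    (∀ (lam : Option F) (i : ℕ), 1 ≤ i → i ≤ k → weyr A0 A1 lam i = 1) :=
  stmt11_general k A0 A1 hA0 hA1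
end

section
/- Let c = (c_1, ..., c_{m+1}) and d = (d_1, ..., d_m) be weakly decreasing sequences of nonnegative integers with d_i < c_i for some i, and let h = min{i : d_i < c_i}. If d_i ≥ c_{i+1} for 1 ≤ i ≤ m and d_i = c_{i+1} for h ≤ i ≤ m, then for the conjugates r of c and s of d (with r_0 = m+1, s_0 = m), one has r_j ≤ s_j + 1 for all j ≥ 1 and r_j = s_j + 1 for 1 ≤ j ≤ c_h. -/
/-- Forward direction of Proposition 4.5 (with Lemma 4.4): if `d` (length `m`) is
1step-majorized by `c` (length `m+1`), i.e. `d_i ≥ c_{i+1}` for all `1 ≤ i ≤ m` and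
`d_i = c_{i+1}` for `h ≤ i ≤ m` where `h = min{i : d_i < c_i}`, then the conjugates
`r` of `c` and `s` of `d` satisfy `r_j ≤ s_j + 1` for all `j ≥ 1` and
`r_j = s_j + 1` for `1 ≤ j ≤ c_h`. -/
theorem stmt18 (m : ℕ) (c d : ℕ → ℕ)
    (hc : ∀ i j, 1 ≤ i → i ≤ j → j ≤ m + 1 → c j ≤ c i)
    (hd : ∀ i j, 1 ≤ i → i ≤ j → j ≤ m → d j ≤ d i)
    (h : ℕ) (hh1 : 1 ≤ h) (hh2 : h ≤ m) (hh3 : d h < c h)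
    (hh4 : ∀ i, 1 ≤ i → i < h → c i ≤ d i)
    (hmaj1 : ∀ i, 1 ≤ i → i ≤ m → c (i + 1) ≤ d i)
    (hmaj2 : ∀ i, h ≤ i → i ≤ m → d i = c (i + 1))
    (r s : ℕ → ℕ)
    (hr0 : r 0 = m + 1) (hs0 : s 0 = m)
    (hr : ∀ k, 1 ≤ k → r k = ((Finset.Icc 1 (m + 1)).filter fun i => k ≤ c i).card)
    (hs : ∀ k, 1 ≤ k → s k = ((Finset.Icc 1 m).filter fun i => k ≤ d i).card) :
    (∀ j, 1 ≤ j → r j ≤ s j + 1) ∧ (∀ j, 1 ≤ j → j ≤ c h → r j = s j + 1) := by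
  constructor
  · intro j hj
    rw [hr j hj, hs j hj]
    set A := (Finset.Icc 1 (m + 1)).filter (fun i => j ≤ c i) with hA
    set B := (Finset.Icc 1 m).filter (fun i => j ≤ d i) with hB
    have hsub : A ⊆ insert 1 (A.erase 1) := by
      intro x hx
      by_cases hx1 : x = 1
      · simp [hx1]
      · exact Finset.mem_insert_of_mem (Finset.mem_erase.2 ⟨hx1, hx⟩)
    have h1 : A.card ≤ (A.erase 1).card + 1 := by
      calc A.card ≤ (insert 1 (A.erase 1)).card := Finset.card_le_card hsub
        _ ≤ (A.erase 1).card + 1 := Finset.card_insert_le _ _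
    have h2 : (A.erase 1).card ≤ B.card := by
      apply Finset.card_le_card_of_injOn (fun i => i - 1)
      · intro a ha
        simp only [Finset.mem_coe, hA, Finset.mem_erase, Finset.mem_filter, Finset.mem_Icc] at ha
        simp only [Finset.mem_coe, hB, Finset.mem_filter, Finset.mem_Icc]
        obtain ⟨ha1, ⟨ha2, ha3⟩, ha4⟩ := ha
        have ha2' : 2 ≤ a := by omega
        refine ⟨⟨by omega, by omega⟩, ?_⟩
        have := hmaj1 (a - 1) (by omega) (by omega)
        have hae : a - 1 + 1 = a := by omega
        rw [hae] at this
        omega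
      · intro a ha b hb hab
        simp only [hA, Finset.coe_erase, Set.mem_diff, Finset.coe_filter,
          Set.mem_setOf_eq, Finset.mem_Icc, Set.mem_singleton_iff] at ha hb
        simp only [] at hab
        omega
    omega
  · intro j hj1 hj2
    rw [hr j hj1, hs j hj1]
    set A := (Finset.Icc 1 (m + 1)).filter (fun i => j ≤ c i) with hA
    set B := (Finset.Icc 1 m).filter (fun i => j ≤ d i) with hB
    have hhA : h ∈ A := by
      simp only [hA, Finset.mem_filter, Finset.mem_Icc]
      exact ⟨⟨hh1, by omega⟩, hj2⟩
    have hcard : (A.erase h).card = B.card := by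
      apply Finset.card_bij' (fun i _ => if i < h then i else i - 1)
        (fun i _ => if i < h then i else i + 1)
      · intro a ha
        simp only [hA, Finset.mem_erase, Finset.mem_filter, Finset.mem_Icc] at ha
        obtain ⟨ha1, ⟨ha2, ha3⟩, ha4⟩ := ha
        simp only [hB, Finset.mem_filter, Finset.mem_Icc]
        by_cases hlt : a < h
        · simp only [if_pos hlt]
          refine ⟨⟨ha2, by omega⟩, ?_⟩
          have := hh4 a ha2 hlt
          omega
        · simp only [if_neg hlt]
          have hagt : h < a := by omega
          refine ⟨⟨by omega, by omega⟩, ?_⟩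
          have := hmaj2 (a - 1) (by omega) (by omega)
          have hae : a - 1 + 1 = a := by omega
          rw [hae] at this
          omega
      · intro b hb
        simp only [hB, Finset.mem_filter, Finset.mem_Icc] at hb
        obtain ⟨⟨hb1, hb2⟩, hb3⟩ := hb
        simp only [hA, Finset.mem_erase, Finset.mem_filter, Finset.mem_Icc]
        by_cases hlt : b < h
        · simp only [if_pos hlt]
          refine ⟨by omega, ⟨hb1, by omega⟩, ?_⟩
          have hch : c h ≤ c b := hc b h hb1 (by omega) (by omega)
          omega
        · simp only [if_neg hlt]
          refine ⟨by omega, ⟨by omega, by omega⟩, ?_⟩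
          have := hmaj2 b (by omega) hb2
          omega
      · intro a ha
        simp only [hA, Finset.mem_erase, Finset.mem_filter, Finset.mem_Icc] at ha
        obtain ⟨ha1, ⟨ha2, ha3⟩, ha4⟩ := ha
        by_cases hlt : a < h
        · simp [if_pos hlt, hlt]
        · have hagt : h < a := by omega
          simp only [if_neg hlt]
          have : ¬ (a - 1 < h) := by omega
          simp only [if_neg this]
          omega
      · intro b hb
        simp only [hB, Finset.mem_filter, Finset.mem_Icc] at hb
        obtain ⟨⟨hb1, hb2⟩, hb3⟩ := hb
        by_cases hlt : b < h
        · simp [if_pos hlt, hlt]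
        · simp only [if_neg hlt]
          have : ¬ (b + 1 < h) := by omega
          simp only [if_neg this]
          omega
    rw [← Finset.card_erase_add_one hhA, hcard]
end
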